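/- The purely axial l = m modes of a rotating isentropic Newtonian star: let m ≥ 1 be an integer, and for integers j ≥ 1 set Q_j = √(((j+m)(j−m))/((2j−1)(2j+1))). Let κ ∈ ℝ and let U : (0,∞) → ℝ be differentiable and not identically zero, and suppose that for all r > 0 the following four equations hold (the perturbed Euler equations for a velocity perturbation consisting of a single axial term with l = m): (i) (κ m(m+1)/2 − m) U(r) = 0; (ii) −m Q_{m+1} Q_{m+2} [U'(r) − (m+1) U(r)/r] = 0; (iii) (κ m/2 + (m+1) Q_m² − m Q_{m+1}²) U'(r) + (m² − m(m+1)(1 − Q_m² − Q_{m+1}²)) U(r)/r = 0; (iv) (m+1) Q_{m−1} Q_m [U'(r) + m U(r)/r] = 0. Then κ = 2/(m+1) (the Papaloizou–Pringle r-mode frequency κΩ = σ + mΩ = 2Ω/(m+1)), and there exists a nonzero constant K with U(r) = K r^{m+1} for all r > 0. -/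

import Mathlib

noncomputable section

/-- The spherical-harmonic coupling coefficient
`Q_j = √(((j+m)(j−m))/((2j−1)(2j+1)))`. -/
def Qc (m j : ℕ) : ℝ :=
  Real.sqrt ((((j : ℝ) + (m : ℝ)) * ((j : ℝ) - (m : ℝ))) /
    ((2 * (j : ℝ) - 1) * (2 * (j : ℝ) + 1)))

/-!
Equation (i) at a point where `U ≠ 0` forces `κ m (m+1)/2 = m`. Since `Q_{m+1}` and `Q_{m+2}`
are positive, equation (ii) is the Euler equation `r U' = (m+1) U`, whose solutions on `(0, ∞)`
are the multiples of `r^(m+1)`: the quotient `U r / r^(m+1)` has zero derivative.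
-/

theorem Qc_pos_of_lt {m j : ℕ} (h : m < j) : 0 < Qc m j := by
  have hmj : (m : ℝ) < j := by exact_mod_cast h
  have hj : (1 : ℝ) ≤ j := by exact_mod_cast Nat.one_le_of_lt h
  have hm : (0 : ℝ) ≤ m := m.cast_nonneg
  unfold Qc
  apply Real.sqrt_pos.mpr
  apply div_pos <;> apply mul_pos <;> linarith

theorem hasDerivAt_div_pow_of_deriv_eq {U : ℝ → ℝ} {n : ℕ} {r : ℝ} (hr : 0 < r)
    (hU : DifferentiableAt ℝ U r) (hODE : deriv U r = n * U r / r) :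
    HasDerivAt (fun x => U x / x ^ n) 0 r := by
  refine (hU.hasDerivAt.div (hasDerivAt_pow n r) (pow_ne_zero n hr.ne')).congr_deriv ?_
  rw [hODE]
  rcases n with _ | k
  · simp
  · rw [Nat.add_sub_cancel]
    field_simp
    ring

theorem eq_div_pow_mul_pow_of_deriv_eq {U : ℝ → ℝ} {n : ℕ}
    (hU : ∀ r, 0 < r → DifferentiableAt ℝ U r)
    (hODE : ∀ r, 0 < r → deriv U r = n * U r / r) {r₀ r : ℝ} (hr₀ : 0 < r₀) (hr : 0 < r) :
    U r = U r₀ / r₀ ^ n * r ^ n := by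
  have hquot : ∀ x ∈ Set.Ioi (0 : ℝ), HasDerivAt (fun x => U x / x ^ n) 0 x :=
    fun x hx => hasDerivAt_div_pow_of_deriv_eq hx (hU x hx) (hODE x hx)
  have hconst : U r / r ^ n = U r₀ / r₀ ^ n :=
    isOpen_Ioi.is_const_of_deriv_eq_zero isPreconnected_Ioi
      (fun x hx => (hquot x hx).differentiableAt.differentiableWithinAt)
      (fun x hx => (hquot x hx).deriv) hr hr₀
  rw [← hconst, div_mul_cancel₀ _ (pow_ne_zero n hr.ne')]

theorem pure_axial_l_eq_m_modes_general (m : ℕ) (hm : 1 ≤ m) (κ : ℝ) (U : ℝ → ℝ)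
    (hUdiff : ∀ r : ℝ, 0 < r → DifferentiableAt ℝ U r)
    (hUne : ∃ r : ℝ, 0 < r ∧ U r ≠ 0)
    -- (i)  (κ m(m+1)/2 − m) U = 0
    (h1 : ∀ r : ℝ, 0 < r →
      (κ * (m : ℝ) * ((m : ℝ) + 1) / 2 - (m : ℝ)) * U r = 0)
    -- (ii)  −m Q_{m+1} Q_{m+2} [U' − (m+1) U/r] = 0
    (h2 : ∀ r : ℝ, 0 < r →
      -(m : ℝ) * Qc m (m + 1) * Qc m (m + 2) *
        (deriv U r - ((m : ℝ) + 1) * U r / r) = 0) :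
    κ = 2 / ((m : ℝ) + 1) ∧
      ∃ K : ℝ, K ≠ 0 ∧ ∀ r : ℝ, 0 < r → U r = K * r ^ (m + 1) := by
  obtain ⟨r₀, hr₀, hUr₀⟩ := hUne
  have hm0 : (m : ℝ) ≠ 0 := Nat.cast_ne_zero.mpr (by omega)
  have hκ : κ = 2 / ((m : ℝ) + 1) := by
    have hc := (mul_eq_zero.mp (h1 r₀ hr₀)).resolve_right hUr₀
    field_simp
    apply mul_left_cancel₀ hm0
    linarith
  have hcoef : -(m : ℝ) * Qc m (m + 1) * Qc m (m + 2) ≠ 0 :=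
    mul_ne_zero (mul_ne_zero (neg_ne_zero.mpr hm0) (Qc_pos_of_lt (by omega)).ne')
      (Qc_pos_of_lt (by omega)).ne'
  have hODE : ∀ r, 0 < r → deriv U r = ((m + 1 : ℕ) : ℝ) * U r / r := by
    intro r hr
    push_cast
    linarith [(mul_eq_zero.mp (h2 r hr)).resolve_left hcoef]
  exact ⟨hκ, U r₀ / r₀ ^ (m + 1), div_ne_zero hUr₀ (pow_ne_zero _ hr₀.ne'),
    fun r hr => eq_div_pow_mul_pow_of_deriv_eq hUdiff hODE hr₀ hr⟩

/-- The purely axial `l = m` modes of a rotating isentropic Newtonian star: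
if `U` is differentiable on `(0,∞)`, not identically zero, and the four
perturbed Euler equations for a single axial term with `l = m ≥ 1` hold for
all `r > 0`, then `κ = 2/(m+1)` (the Papaloizou–Pringle r-mode frequency)
and `U(r) = K r^(m+1)` for some nonzero constant `K`. -/
theorem pure_axial_l_eq_m_modes (m : ℕ) (hm : 1 ≤ m) (κ : ℝ) (U : ℝ → ℝ)
    (hUdiff : ∀ r : ℝ, 0 < r → DifferentiableAt ℝ U r)
    (hUne : ∃ r : ℝ, 0 < r ∧ U r ≠ 0)
    -- (i)  (κ m(m+1)/2 − m) U = 0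
    (h1 : ∀ r : ℝ, 0 < r →
      (κ * (m : ℝ) * ((m : ℝ) + 1) / 2 - (m : ℝ)) * U r = 0)
    -- (ii)  −m Q_{m+1} Q_{m+2} [U' − (m+1) U/r] = 0
    (h2 : ∀ r : ℝ, 0 < r →
      -(m : ℝ) * Qc m (m + 1) * Qc m (m + 2) *
        (deriv U r - ((m : ℝ) + 1) * U r / r) = 0)
    -- (iii)  (κ m/2 + (m+1) Q_m² − m Q_{m+1}²) U'
    --          + (m² − m(m+1)(1 − Q_m² − Q_{m+1}²)) U/r = 0
    (h3 : ∀ r : ℝ, 0 < r →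
      (κ * (m : ℝ) / 2 + ((m : ℝ) + 1) * (Qc m m) ^ 2
          - (m : ℝ) * (Qc m (m + 1)) ^ 2) * deriv U r
        + ((m : ℝ) ^ 2 - (m : ℝ) * ((m : ℝ) + 1) *
            (1 - (Qc m m) ^ 2 - (Qc m (m + 1)) ^ 2)) * U r / r = 0)
    -- (iv)  (m+1) Q_{m−1} Q_m [U' + m U/r] = 0
    (h4 : ∀ r : ℝ, 0 < r →
      ((m : ℝ) + 1) * Qc m (m - 1) * Qc m m *
        (deriv U r + (m : ℝ) * U r / r) = 0) :
    κ = 2 / ((m : ℝ) + 1) ∧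
      ∃ K : ℝ, K ≠ 0 ∧ ∀ r : ℝ, 0 < r → U r = K * r ^ (m + 1) :=
  pure_axial_l_eq_m_modes_general m hm κ U hUdiff hUne h1 h2
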